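/- arXiv:1208.0045 — 5 statements merged into one kernel-verified Lean document; each statement's English description precedes it below -/
import Mathlib

section
/- Let θ* be an equilibrium of the Kuramoto model on a connected weighted graph such that |θ*_i − θ*_j| ≤ γ < π/2 for every edge {i,j}. Then the Jacobian J(θ*) = −B diag({a_{ij} cos(θ*_i − θ*_j)}) Bᵀ is negative semidefinite with kernel exactly span(1_n); in particular it has rank n−1. -/
open Matrix

/-- At a phase-cohesive equilibrium of the Kuramoto model on a connected weighted
graph, the Jacobian `J = -B diag(a_e cos(θ_{s e} - θ_{t e})) Bᵀ` is negative
semidefinite, its kernel is exactly the span of `1_n`, and its rank is `n - 1`. -/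
theorem kuramoto_jacobian_neg_semidef_kernel_rank
    (n m : ℕ) (s t : Fin m → Fin n) (a : Fin m → ℝ) (ω : Fin n → ℝ)
    (B : Matrix (Fin n) (Fin m) ℝ) (A J : Matrix (Fin n) (Fin n) ℝ)
    (θ : Fin n → ℝ) (γ : ℝ)
    (hst : ∀ e, s e ≠ t e)
    (ha : ∀ e, 0 < a e)
    (hB : ∀ i e, B i e = if i = s e then 1 else if i = t e then -1 else 0)
    (hA : ∀ i j, A i j = ∑ e, if (s e = i ∧ t e = j) ∨ (s e = j ∧ t e = i) then a e else 0)
    (hconn : (SimpleGraph.fromRel (fun i j => ∃ e, s e = i ∧ t e = j)).Connected)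
    (hγ : 0 ≤ γ) (hγ2 : γ < Real.pi / 2)
    (hcohesive : ∀ e, |θ (s e) - θ (t e)| ≤ γ)
    (hequilibrium : ∀ i, ω i = ∑ j, A i j * Real.sin (θ i - θ j))
    (hJ : J = -(B * Matrix.diagonal (fun e => a e * Real.cos (θ (s e) - θ (t e))) * Bᵀ)) :
    (∀ v : Fin n → ℝ, v ⬝ᵥ J.mulVec v ≤ 0) ∧
    (∀ v : Fin n → ℝ, J.mulVec v = 0 ↔ ∃ c : ℝ, v = fun _ => c) ∧
    J.rank = n - 1 := by
  set c : Fin m → ℝ := fun e => a e * Real.cos (θ (s e) - θ (t e)) with hc_def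
  -- positivity of weights
  have hc : ∀ e, 0 < c e := by
    intro e
    refine mul_pos (ha e) (Real.cos_pos_of_mem_Ioo ?_)
    have h1 := (abs_le.mp (hcohesive e)).1
    have h2 := (abs_le.mp (hcohesive e)).2
    constructor <;> [linarith; linarith]
  -- incidence difference
  have hBtv : ∀ (v : Fin n → ℝ) e, (Bᵀ *ᵥ v) e = v (s e) - v (t e) := by
    intro v e
    have key : ∀ i : Fin n, Bᵀ e i * v i =
        (if s e = i then v i else 0) + (if t e = i then -(v i) else 0) := by
      intro i
      rw [Matrix.transpose_apply, hB]
      by_cases h1 : i = s e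
      · subst h1
        simp [hst e, Ne.symm (hst e)]
      · by_cases h2 : i = t e
        · subst h2
          simp [h1, hst e]
        · simp [h1, h2, Ne.symm h1, Ne.symm h2]
    simp only [Matrix.mulVec, dotProduct]
    rw [Finset.sum_congr rfl fun i _ => key i, Finset.sum_add_distrib,
      Finset.sum_ite_eq, Finset.sum_ite_eq]
    simp [sub_eq_add_neg]
  -- quadratic form
  have hquad : ∀ v : Fin n → ℝ, v ⬝ᵥ J *ᵥ v = -∑ e, c e * (v (s e) - v (t e)) ^ 2 := by
    intro v
    rw [hJ, Matrix.neg_mulVec, dotProduct_neg, Matrix.mul_assoc,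
      ← Matrix.mulVec_mulVec, Matrix.dotProduct_mulVec, ← Matrix.mulVec_transpose]
    congr 1
    rw [← Matrix.mulVec_mulVec]
    simp only [dotProduct, Matrix.mulVec_diagonal, hBtv]
    refine Finset.sum_congr rfl fun e _ => by ring
  -- negative semidefinite
  have hnsd : ∀ v : Fin n → ℝ, v ⬝ᵥ J *ᵥ v ≤ 0 := by
    intro v
    rw [hquad]
    simp only [neg_nonpos]
    exact Finset.sum_nonneg fun e _ => mul_nonneg (hc e).le (sq_nonneg _)
  -- constant along edges implies constant (connectivity)
  have hconst : ∀ (v : Fin n → ℝ), (∀ e, v (s e) = v (t e)) → ∀ i j, v i = v j := by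
    intro v hv i j
    obtain ⟨p⟩ := hconn i j
    induction p with
    | nil => rfl
    | cons h p ih =>
      rw [SimpleGraph.fromRel_adj] at h
      obtain ⟨-, (⟨e, he1, he2⟩ | ⟨e, he1, he2⟩)⟩ := h
      · rw [← ih]; rw [← he1, ← he2]; exact hv e
      · rw [← ih]; rw [← he1, ← he2]; exact (hv e).symm
  -- kernel characterization
  have hker : ∀ v : Fin n → ℝ, J *ᵥ v = 0 ↔ ∃ cc : ℝ, v = fun _ => cc := by
    intro v
    constructor
    · intro hv
      have hq : v ⬝ᵥ J *ᵥ v = 0 := by rw [hv, dotProduct_zero]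
      rw [hquad, neg_eq_zero] at hq
      have hzero : ∀ e ∈ Finset.univ, c e * (v (s e) - v (t e)) ^ 2 = 0 :=
        (Finset.sum_eq_zero_iff_of_nonneg fun e _ =>
          mul_nonneg (hc e).le (sq_nonneg _)).mp hq
      have hedge : ∀ e, v (s e) = v (t e) := by
        intro e
        have := hzero e (Finset.mem_univ e)
        have h2 : (v (s e) - v (t e)) ^ 2 = 0 := by
          rcases mul_eq_zero.mp this with h | h
          · exact absurd h (hc e).ne'
          · exact h
        have := pow_eq_zero_iff (n := 2) (by norm_num) |>.mp h2
        linarith [sub_eq_zero.mp this]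
      have hne : Nonempty (Fin n) := hconn.nonempty
      obtain ⟨i0⟩ := hne
      exact ⟨v i0, funext fun j => (hconst v hedge j i0)⟩
    · rintro ⟨cc, rfl⟩
      have hBt : Bᵀ *ᵥ (fun _ => cc) = 0 := by
        funext e; rw [hBtv]; simp
      rw [hJ, Matrix.neg_mulVec, Matrix.mul_assoc, ← Matrix.mulVec_mulVec, ← Matrix.mulVec_mulVec, hBt]
      simp
  refine ⟨hnsd, hker, ?_⟩
  -- rank
  have hne : Nonempty (Fin n) := hconn.nonempty
  have hkerEq : LinearMap.ker J.mulVecLin = Submodule.span ℝ {(fun _ => (1:ℝ) : Fin n → ℝ)} := by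
    ext v
    rw [LinearMap.mem_ker, Matrix.mulVecLin_apply, hker, Submodule.mem_span_singleton]
    constructor
    · rintro ⟨cc, rfl⟩; exact ⟨cc, by funext i; simp⟩
    · rintro ⟨cc, rfl⟩; exact ⟨cc, by funext i; simp⟩
  have hone : (fun _ => (1:ℝ) : Fin n → ℝ) ≠ 0 := by
    obtain ⟨i0⟩ := hne
    intro h
    have := congrFun h i0
    norm_num at this
  have hkerdim : Module.finrank ℝ (LinearMap.ker J.mulVecLin) = 1 := by
    rw [hkerEq]
    exact finrank_span_singleton hone
  have := LinearMap.finrank_range_add_finrank_ker J.mulVecLin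
  rw [hkerdim, Module.finrank_fintype_fun_eq_card, Fintype.card_fin] at this
  have hrank : J.rank = Module.finrank ℝ (LinearMap.range J.mulVecLin) := rfl
  omega
end

section
/- Necessary synchronization condition (incremental boundedness): if θ satisfies ω_i = Σ_k a_{ik} sin(θ_i − θ_k) for all i, with |θ_i − θ_j| ≤ γ < π/2 on all edges, then (deg_i + deg_j)·sin(γ) ≥ |ω_i − ω_j| for every edge {i,j}. -/
open Matrix

lemma kuramoto_aux (n : ℕ) (A : Matrix (Fin n) (Fin n) ℝ) (ω θ : Fin n → ℝ) (γ : ℝ)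
    (hAnonneg : ∀ i j, 0 ≤ A i j)
    (hγ : 0 ≤ γ) (hγ2 : γ < Real.pi / 2)
    (hfix : ∀ i, ω i = ∑ k, A i k * Real.sin (θ i - θ k))
    (hcohesive : ∀ i j, A i j ≠ 0 → |θ i - θ j| ≤ γ) (i : Fin n) :
    |ω i| ≤ (∑ k, A i k) * Real.sin γ := by
  have hsγ : 0 ≤ Real.sin γ :=
    Real.sin_nonneg_of_nonneg_of_le_pi hγ (by linarith [Real.pi_pos])
  rw [hfix i, Finset.sum_mul]
  refine (Finset.abs_sum_le_sum_abs _ _).trans (Finset.sum_le_sum fun k _ => ?_)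
  rw [abs_mul, abs_of_nonneg (hAnonneg i k)]
  by_cases h : A i k = 0
  · simp [h, mul_nonneg (hAnonneg i k) hsγ]
  · refine mul_le_mul_of_nonneg_left ?_ (hAnonneg i k)
    have hc := hcohesive i k h
    have habs : |Real.sin (θ i - θ k)| = Real.sin |θ i - θ k| := by
      rcases le_or_gt 0 (θ i - θ k) with h1 | h1
      · rw [abs_of_nonneg h1, abs_of_nonneg]
        refine Real.sin_nonneg_of_nonneg_of_le_pi h1 ?_
        have := (abs_of_nonneg h1) ▸ hc
        linarith [Real.pi_pos]
      · rw [abs_of_neg h1, Real.sin_neg, abs_of_nonpos]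
        refine Real.sin_nonpos_of_nonpos_of_neg_pi_le h1.le ?_
        have := (abs_of_neg h1) ▸ hc
        linarith [Real.pi_pos]
    rw [habs]
    exact Real.sin_le_sin_of_le_of_le_pi_div_two
      (le_trans (by linarith [Real.pi_pos]) (abs_nonneg _)) hγ2.le hc

/-- Necessary synchronization condition (incremental boundedness): a
phase-cohesive solution of the Kuramoto fixed-point equations requires
`(deg_i + deg_j) * sin γ ≥ |ω_i - ω_j|` on every edge `{i,j}`. -/
theorem necessary_sync_condition_incremental
    (n : ℕ) (A : Matrix (Fin n) (Fin n) ℝ) (ω θ : Fin n → ℝ) (γ : ℝ)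
    (hAsymm : Aᵀ = A) (hAnonneg : ∀ i j, 0 ≤ A i j) (hAdiag : ∀ i, A i i = 0)
    (hω : ∑ i, ω i = 0)
    (hγ : 0 ≤ γ) (hγ2 : γ < Real.pi / 2)
    (hfix : ∀ i, ω i = ∑ k, A i k * Real.sin (θ i - θ k))
    (hcohesive : ∀ i j, A i j ≠ 0 → |θ i - θ j| ≤ γ) :
    ∀ i j, A i j ≠ 0 → ((∑ k, A i k) + (∑ k, A j k)) * Real.sin γ ≥ |ω i - ω j| := by
  intro i j _
  have hi := kuramoto_aux n A ω θ γ hAnonneg hγ hγ2 hfix hcohesive i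
  have hj := kuramoto_aux n A ω θ γ hAnonneg hγ hγ2 hfix hcohesive j
  calc |ω i - ω j| ≤ |ω i| + |ω j| := abs_sub _ _
    _ ≤ (∑ k, A i k) * Real.sin γ + (∑ k, A j k) * Real.sin γ := add_le_add hi hj
    _ = _ := (add_mul _ _ _).symm
end

section
/- For an acyclic connected graph (tree), there exists a solution θ of the Kuramoto fixed-point equations with |θ_i − θ_j| ≤ γ < π/2 on all edges if and only if ‖Bᵀ L† ω‖_∞ ≤ sin(γ); moreover in this case Bᵀθ = arcsin(Bᵀ L† ω) componentwise. -/
open Matrix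

/-- Exact synchronization condition for acyclic graphs (trees): there exists a
phase-cohesive solution of the Kuramoto fixed-point equations iff
`‖Bᵀ L† ω‖_∞ ≤ sin γ`, and in that case `Bᵀθ = arcsin(Bᵀ L† ω)`. -/
theorem sync_condition_acyclic
    (n m : ℕ) (s t : Fin m → Fin n) (a : Fin m → ℝ)
    (B : Matrix (Fin n) (Fin m) ℝ) (L M : Matrix (Fin n) (Fin n) ℝ)
    (ω : Fin n → ℝ) (γ : ℝ)
    (hB : ∀ i e, B i e = if i = s e then 1 else if i = t e then -1 else 0)
    (hst : ∀ e, s e ≠ t e)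
    (ha : ∀ e, 0 < a e)
    (hconn : (SimpleGraph.fromRel (fun i j => ∃ e, s e = i ∧ t e = j)).Connected)
    (hacyclic : ∀ ψ : Fin m → ℝ, B.mulVec ψ = 0 → ψ = 0)
    (hL : L = B * Matrix.diagonal a * Bᵀ)
    (hM1 : L * M * L = L) (hM2 : M * L * M = M)
    (hM3 : (L * M)ᵀ = L * M) (hM4 : (M * L)ᵀ = M * L)
    (hω : ∑ i, ω i = 0)
    (hγ : 0 ≤ γ) (hγ2 : γ < Real.pi / 2) :
    ((∃ θ : Fin n → ℝ,
        ω = (B * Matrix.diagonal a).mulVec (fun e => Real.sin (Bᵀ.mulVec θ e)) ∧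
        ∀ e, |Bᵀ.mulVec θ e| ≤ γ) ↔
      ∀ e, |Bᵀ.mulVec (M.mulVec ω) e| ≤ Real.sin γ) ∧
    (∀ θ : Fin n → ℝ,
        ω = (B * Matrix.diagonal a).mulVec (fun e => Real.sin (Bᵀ.mulVec θ e)) →
        (∀ e, |Bᵀ.mulVec θ e| ≤ γ) →
        Bᵀ.mulVec θ = fun e => Real.arcsin (Bᵀ.mulVec (M.mulVec ω) e)) := by
  have hpi : (0:ℝ) < Real.pi / 2 := by positivity
  -- edge formula for Bᵀ
  have hBt : ∀ (x : Fin n → ℝ) (e : Fin m), Bᵀ.mulVec x e = x (s e) - x (t e) := by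
    intro x e
    simp only [Matrix.mulVec, dotProduct, Matrix.transpose_apply]
    have : ∀ i : Fin n, B i e * x i =
        (if i = s e then x i else 0) + (if i = t e then - x i else 0) := by
      intro i
      rw [hB]
      by_cases h1 : i = s e
      · subst h1
        simp [(hst e)]
      · by_cases h2 : i = t e <;> simp [h1, h2, Ne.symm (hst e)]
    rw [Finset.sum_congr rfl fun i _ => this i, Finset.sum_add_distrib,
      Finset.sum_ite_eq', Finset.sum_ite_eq']
    simp [sub_eq_add_neg]
  -- column sums of B vanish
  have hcol : ∀ e, ∑ i, B i e = 0 := by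
    intro e
    have : ∀ i : Fin n, B i e =
        (if i = s e then (1:ℝ) else 0) + (if i = t e then -1 else 0) := by
      intro i
      rw [hB]
      by_cases h1 : i = s e
      · subst h1
        simp [(hst e)]
      · by_cases h2 : i = t e <;> simp [h1, h2, Ne.symm (hst e)]
    rw [Finset.sum_congr rfl fun i _ => this i, Finset.sum_add_distrib,
      Finset.sum_ite_eq', Finset.sum_ite_eq']
    simp
  -- the entries of any vector in the range of B sum to zero
  have hsumB : ∀ y : Fin m → ℝ, ∑ i, B.mulVec y i = 0 := by
    intro y
    simp only [Matrix.mulVec, dotProduct]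
    rw [Finset.sum_comm]
    apply Finset.sum_eq_zero
    intro e _
    rw [← Finset.sum_mul, hcol, zero_mul]
  -- vectors with Bᵀ x = 0 are constant (uses connectivity)
  have hconst : ∀ x : Fin n → ℝ, Bᵀ.mulVec x = 0 → ∀ i j, x i = x j := by
    intro x hx i j
    have hadj : ∀ p q, (SimpleGraph.fromRel
        (fun i j => ∃ e, s e = i ∧ t e = j)).Adj p q → x p = x q := by
      intro p q hpq
      rw [SimpleGraph.fromRel_adj] at hpq
      obtain ⟨-, h | h⟩ := hpq
      · obtain ⟨e, he1, he2⟩ := h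
        have := congrFun hx e
        rw [hBt, he1, he2] at this
        simpa [sub_eq_zero] using this
      · obtain ⟨e, he1, he2⟩ := h
        have := congrFun hx e
        rw [hBt, he1, he2] at this
        simpa [sub_eq_zero, eq_comm] using this
    obtain ⟨w⟩ := hconn.preconnected i j
    induction w with
    | nil => rfl
    | cons h p ih => exact (hadj _ _ h).trans ih
  -- symmetry of L
  have hLsym : Lᵀ = L := by
    rw [hL]
    simp [Matrix.transpose_mul, Matrix.mul_assoc]
  have hLLM : L * (L * M) = L := by
    calc L * (L * M) = Lᵀ * (L * M)ᵀ := by rw [hLsym, hM3]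
      _ = ((L * M) * L)ᵀ := by simp [Matrix.transpose_mul]
      _ = Lᵀ := by rw [hM1]
      _ = L := hLsym
  -- quadratic form: L x = 0 → Bᵀ x = 0
  have hquad : ∀ x : Fin n → ℝ, L.mulVec x = 0 → Bᵀ.mulVec x = 0 := by
    intro x hx
    have h0 : x ⬝ᵥ L.mulVec x = 0 := by rw [hx]; simp
    have hLx : L.mulVec x = B.mulVec ((Matrix.diagonal a).mulVec (Bᵀ.mulVec x)) := by
      rw [Matrix.mulVec_mulVec, Matrix.mulVec_mulVec, hL]
    rw [hLx, Matrix.dotProduct_mulVec, ← Matrix.mulVec_transpose] at h0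
    have h1 : ∑ e, a e * (Bᵀ.mulVec x e)^2 = 0 := by
      rw [← h0]
      simp only [dotProduct, Matrix.mulVec_diagonal]
      apply Finset.sum_congr rfl
      intro e _
      ring
    have h2 : ∀ e ∈ Finset.univ, (0:ℝ) ≤ a e * (Bᵀ.mulVec x e)^2 := by
      intro e _
      have := (ha e).le
      positivity
    funext e
    have := (Finset.sum_eq_zero_iff_of_nonneg h2).mp h1 e (Finset.mem_univ e)
    have hae := (ha e).ne'
    have : (Bᵀ.mulVec x e)^2 = 0 := by
      rcases mul_eq_zero.mp this with h | h
      · exact absurd h hae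
      · exact h
    simpa using pow_eq_zero_iff (n := 2) (by norm_num) |>.mp this
  -- key identity : L (M ω) = ω
  have hkey : L.mulVec (M.mulVec ω) = ω := by
    set v : Fin n → ℝ := ω - (L * M).mulVec ω with hv
    have hLv : L.mulVec v = 0 := by
      rw [hv, Matrix.mulVec_sub, Matrix.mulVec_mulVec, hLLM, sub_self]
    have hBv := hquad v hLv
    have hcv := hconst v hBv
    have hsv : ∑ i, v i = 0 := by
      have hPω : (L * M).mulVec ω = B.mulVec
          ((Matrix.diagonal a).mulVec (Bᵀ.mulVec (M.mulVec ω))) := by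
        rw [Matrix.mulVec_mulVec, Matrix.mulVec_mulVec, ← Matrix.mulVec_mulVec, hL]
      have : ∑ i, (L * M).mulVec ω i = 0 := by rw [hPω]; exact hsumB _
      simp [hv, Finset.sum_sub_distrib, hω, this]
    have hn : 0 < n := by
      have := hconn.nonempty
      exact Fin.pos_iff_nonempty.mpr this
    have hv0 : ∀ i, v i = 0 := by
      intro i
      have : ∑ j, v j = (n : ℝ) * v i := by
        rw [Finset.sum_congr rfl fun j _ => hcv j i]
        simp [Finset.card_univ, mul_comm]
      have hne : (n : ℝ) ≠ 0 := Nat.cast_ne_zero.mpr hn.ne'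
      have h0 : (n : ℝ) * v i = 0 := by rw [← this, hsv]
      rcases mul_eq_zero.mp h0 with h | h
      · exact absurd h hne
      · exact h
    have : (L * M).mulVec ω = ω := by
      funext i
      have := hv0 i
      simp only [hv, Pi.sub_apply] at this
      linarith
    rw [Matrix.mulVec_mulVec, this]
  -- surjectivity of Bᵀ
  have hsurj : Function.Surjective (Bᵀ.mulVec) := by
    have hinj : Function.Injective (B.mulVecLin) := by
      intro x y h
      have h0 : B.mulVec (x - y) = 0 := by
        rw [Matrix.mulVec_sub]
        simp only [Matrix.mulVecLin_apply] at h
        rw [h, sub_self]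
      have := hacyclic _ h0
      exact sub_eq_zero.mp this
    have hr1 : B.rank = m := by
      rw [Matrix.rank, LinearMap.finrank_range_of_inj hinj, Module.finrank_fin_fun]
    have hr2 : (Bᵀ).rank = m := by rw [Matrix.rank_transpose]; exact hr1
    have hrange : LinearMap.range (Bᵀ.mulVecLin) = ⊤ := by
      apply Submodule.eq_top_of_finrank_eq
      rw [← Matrix.rank, hr2, Module.finrank_fin_fun]
    intro z
    obtain ⟨θ, hθ⟩ := LinearMap.range_eq_top.mp hrange z
    exact ⟨θ, hθ⟩
  -- for any solution, sin (Bᵀ θ) = Bᵀ M ω componentwise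
  have hsin : ∀ θ : Fin n → ℝ,
      ω = (B * Matrix.diagonal a).mulVec (fun e => Real.sin (Bᵀ.mulVec θ e)) →
      ∀ e, Real.sin (Bᵀ.mulVec θ e) = Bᵀ.mulVec (M.mulVec ω) e := by
    intro θ hθ1
    have h1 : B.mulVec ((Matrix.diagonal a).mulVec (fun e => Real.sin (Bᵀ.mulVec θ e)))
        = B.mulVec ((Matrix.diagonal a).mulVec (Bᵀ.mulVec (M.mulVec ω))) := by
      rw [Matrix.mulVec_mulVec (fun e => Real.sin (Bᵀ.mulVec θ e)) B (Matrix.diagonal a),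
        ← hθ1,
        Matrix.mulVec_mulVec (Bᵀ.mulVec (M.mulVec ω)) B (Matrix.diagonal a),
        Matrix.mulVec_mulVec (M.mulVec ω) (B * Matrix.diagonal a) Bᵀ, ← hL, hkey]
    have h2 : B.mulVec ((Matrix.diagonal a).mulVec (fun e => Real.sin (Bᵀ.mulVec θ e))
        - (Matrix.diagonal a).mulVec (Bᵀ.mulVec (M.mulVec ω))) = 0 := by
      rw [Matrix.mulVec_sub, h1, sub_self]
    have h3 := hacyclic _ h2
    intro e
    have := congrFun h3 e
    simp only [Pi.sub_apply, Pi.zero_apply, Matrix.mulVec_diagonal, sub_eq_zero] at this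
    exact mul_left_cancel₀ (ha e).ne' this
  constructor
  · constructor
    · rintro ⟨θ, hθ1, hθ2⟩ e
      rw [← hsin θ hθ1 e]
      have ht := hθ2 e
      set u := Bᵀ.mulVec θ e with hu
      have habs : |Real.sin u| = Real.sin |u| := by
        rcases abs_cases u with ⟨h1, h2⟩ | ⟨h1, h2⟩
        · rw [h1, abs_of_nonneg (Real.sin_nonneg_of_nonneg_of_le_pi h2
            (by linarith [Real.pi_gt_three]))]
        · have hneg : Real.sin u ≤ 0 := by
            have : Real.sin (-u) ≥ 0 := Real.sin_nonneg_of_nonneg_of_le_pi (by linarith)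
              (by linarith [Real.pi_gt_three])
            rw [Real.sin_neg] at this
            linarith
          rw [h1, Real.sin_neg, abs_of_nonpos hneg]
      rw [habs]
      have hmem1 : |u| ∈ Set.Icc (-(Real.pi/2)) (Real.pi/2) := by
        constructor <;> [linarith [abs_nonneg u]; linarith]
      have hmem2 : γ ∈ Set.Icc (-(Real.pi/2)) (Real.pi/2) := by
        constructor <;> linarith
      exact Real.strictMonoOn_sin.monotoneOn hmem1 hmem2 ht
    · intro hbound
      obtain ⟨θ, hθ⟩ := hsurj (fun e => Real.arcsin (Bᵀ.mulVec (M.mulVec ω) e))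
      have hle1 : ∀ e, |Bᵀ.mulVec (M.mulVec ω) e| ≤ 1 := by
        intro e
        exact le_trans (hbound e) (Real.sin_le_one γ)
      have hsinθ : ∀ e, Real.sin (Bᵀ.mulVec θ e) = Bᵀ.mulVec (M.mulVec ω) e := by
        intro e
        rw [hθ]
        exact Real.sin_arcsin (by linarith [abs_le.mp (hle1 e)|>.1])
          (abs_le.mp (hle1 e)|>.2)
      refine ⟨θ, ?_, ?_⟩
      · have hfun : (fun e => Real.sin (Bᵀ.mulVec θ e)) = Bᵀ.mulVec (M.mulVec ω) := by
          funext e; exact hsinθ e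
        rw [hfun, Matrix.mulVec_mulVec (M.mulVec ω) (B * Matrix.diagonal a) Bᵀ, ← hL, hkey]
      · intro e
        rw [hθ]
        have h1 : |Real.arcsin (Bᵀ.mulVec (M.mulVec ω) e)|
            = Real.arcsin |Bᵀ.mulVec (M.mulVec ω) e| := by
          rcases abs_cases (Bᵀ.mulVec (M.mulVec ω) e) with ⟨ha1, ha2⟩ | ⟨ha1, ha2⟩
          · rw [ha1, abs_of_nonneg (Real.arcsin_nonneg.mpr ha2)]
          · have hnp : Real.arcsin (Bᵀ.mulVec (M.mulVec ω) e) ≤ 0 := by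
              have := Real.arcsin_nonneg.mpr (neg_nonneg.mpr ha2.le)
              rw [Real.arcsin_neg] at this
              linarith
            rw [ha1, Real.arcsin_neg, abs_of_nonpos hnp]
        rw [h1]
        calc Real.arcsin |Bᵀ.mulVec (M.mulVec ω) e| ≤ Real.arcsin (Real.sin γ) :=
              Real.monotone_arcsin (hbound e)
          _ = γ := Real.arcsin_sin (by linarith) (by linarith)
  · intro θ hθ1 hθ2
    funext e
    rw [← hsin θ hθ1 e]
    have ht := hθ2 e
    have h1 := abs_le.mp ht
    exact (Real.arcsin_sin (by linarith [h1.1]) (by linarith [h1.2])).symm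
end

section
/- Equivalence of fixed points and auxiliary edge variables: for a connected weighted graph, there exists θ with ω = B W sin(Bᵀθ) and ‖Bᵀθ‖_∞ ≤ γ < π/2 if and only if there exists ψ ∈ ℝ^m with B W ψ = ω, ‖ψ‖_∞ ≤ sin(γ), and arcsin(ψ) ∈ Im(Bᵀ) (componentwise arcsin). Moreover then Bᵀθ = arcsin(ψ). -/
open Matrix

/-!
Setting `ψ = sin (Bᵀθ)` turns a cohesive fixed point into an admissible edge vector and,
conversely, `θ'` with `Bᵀθ' = arcsin ψ` is a cohesive fixed point; the bounds transfer
because `sin` and `arcsin` are increasing inverse bijections between `[-π/2, π/2]` and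
`[-1, 1]`. For uniqueness, pair `B W (sin η - sin ξ) = 0` with `θ - θ'` where `η = Bᵀθ`,
`ξ = Bᵀθ'`: this gives `∑ₑ aₑ (ηₑ - ξₑ)(sin ηₑ - sin ξₑ) = 0`, a sum of nonnegative terms
that vanish only where `ηₑ = ξₑ`, since `sin` is strictly increasing on `[-π/2, π/2]`.
-/

namespace Real

lemma abs_sin_le_sin_of_abs_le {x γ : ℝ} (hγ : γ ≤ π / 2) (hx : |x| ≤ γ) :
    |sin x| ≤ sin γ := by
  rw [abs_sin_eq_sin_abs_of_abs_le_pi (by linarith [pi_pos])]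
  exact sin_le_sin_of_le_of_le_pi_div_two (by linarith [abs_nonneg x, pi_pos]) hγ hx

lemma abs_arcsin_le_of_abs_le_sin {y γ : ℝ} (hγ₀ : 0 ≤ γ) (hγ : γ ≤ π / 2)
    (hy : |y| ≤ sin γ) : |arcsin y| ≤ γ := by
  have hγ' : arcsin (sin γ) = γ := arcsin_sin (by linarith [pi_pos]) hγ
  rw [abs_le] at hy ⊢
  constructor
  · simpa [arcsin_neg, hγ'] using arcsin_le_arcsin hy.1
  · simpa [hγ'] using arcsin_le_arcsin hy.2

end Real

lemma StrictMonoOn.sub_mul_sub_pos {f : ℝ → ℝ} {s : Set ℝ} (hf : StrictMonoOn f s)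
    {x y : ℝ} (hx : x ∈ s) (hy : y ∈ s) (hxy : x ≠ y) : 0 < (x - y) * (f x - f y) := by
  rcases hxy.lt_or_gt with hlt | hgt
  · exact mul_pos_of_neg_of_neg (sub_neg.2 hlt) (sub_neg.2 (hf hx hy hlt))
  · exact mul_pos (sub_pos.2 hgt) (sub_pos.2 (hf hy hx hgt))

section

variable {ι κ : Type*} [Fintype ι] [Fintype κ] [DecidableEq κ]

lemma Matrix.dotProduct_mul_diagonal_mulVec (B : Matrix ι κ ℝ) (a : κ → ℝ) (θ : ι → ℝ)
    (u : κ → ℝ) : θ ⬝ᵥ (B * diagonal a) *ᵥ u = ∑ e, a e * (Bᵀ *ᵥ θ) e * u e := by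
  rw [dotProduct_mulVec, ← vecMul_vecMul, ← mulVec_transpose B]
  simp only [dotProduct, vecMul_diagonal]
  exact Finset.sum_congr rfl fun e _ => by ring

theorem Matrix.transpose_mulVec_eq_of_mulVec_comp_eq {f : ℝ → ℝ} {s : Set ℝ}
    (hf : StrictMonoOn f s) (B : Matrix ι κ ℝ) {a : κ → ℝ} (ha : ∀ e, 0 < a e)
    {θ θ' : ι → ℝ} (hθ : ∀ e, (Bᵀ *ᵥ θ) e ∈ s) (hθ' : ∀ e, (Bᵀ *ᵥ θ') e ∈ s)
    (h : (B * diagonal a) *ᵥ (fun e => f ((Bᵀ *ᵥ θ) e)) =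
      (B * diagonal a) *ᵥ (fun e => f ((Bᵀ *ᵥ θ') e))) :
    Bᵀ *ᵥ θ = Bᵀ *ᵥ θ' := by
  set η := Bᵀ *ᵥ θ
  set ξ := Bᵀ *ᵥ θ'
  have hterm : ∀ e, 0 ≤ a e * (η e - ξ e) * (f (η e) - f (ξ e)) := fun e => by
    rcases eq_or_ne (η e) (ξ e) with heq | hne
    · simp [heq]
    · rw [mul_assoc]
      exact (mul_pos (ha e) (hf.sub_mul_sub_pos (hθ e) (hθ' e) hne)).le
  have hsum : ∑ e, a e * (η e - ξ e) * (f (η e) - f (ξ e)) = 0 := calc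
    _ = (θ - θ') ⬝ᵥ (B * diagonal a) *ᵥ ((fun e => f (η e)) - fun e => f (ξ e)) := by
      rw [dotProduct_mul_diagonal_mulVec, mulVec_sub]; rfl
    _ = 0 := by rw [mulVec_sub, h, sub_self, dotProduct_zero]
  funext e
  by_contra hne
  have hpos := mul_pos (ha e) (hf.sub_mul_sub_pos (hθ e) (hθ' e) hne)
  rw [← mul_assoc] at hpos
  exact hpos.ne' ((Finset.sum_eq_zero_iff_of_nonneg fun e _ => hterm e).1 hsum e
    (Finset.mem_univ e))

end

theorem fixed_point_aux_equivalence_general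
    (n m : ℕ) (a : Fin m → ℝ)
    (B : Matrix (Fin n) (Fin m) ℝ) (ω : Fin n → ℝ) (γ : ℝ)
    (ha : ∀ e, 0 < a e)
    (hγ : 0 ≤ γ) (hγ2 : γ < Real.pi / 2) :
    ((∃ θ : Fin n → ℝ,
        ω = (B * Matrix.diagonal a).mulVec (fun e => Real.sin (Bᵀ.mulVec θ e)) ∧
        ∀ e, |Bᵀ.mulVec θ e| ≤ γ) ↔
      (∃ ψ : Fin m → ℝ,
        (B * Matrix.diagonal a).mulVec ψ = ω ∧
        (∀ e, |ψ e| ≤ Real.sin γ) ∧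
        ∃ θ' : Fin n → ℝ, (fun e => Real.arcsin (ψ e)) = Bᵀ.mulVec θ')) ∧
    (∀ (θ : Fin n → ℝ) (ψ : Fin m → ℝ),
        ω = (B * Matrix.diagonal a).mulVec (fun e => Real.sin (Bᵀ.mulVec θ e)) →
        (∀ e, |Bᵀ.mulVec θ e| ≤ γ) →
        (B * Matrix.diagonal a).mulVec ψ = ω →
        (∀ e, |ψ e| ≤ Real.sin γ) →
        (∃ θ' : Fin n → ℝ, (fun e => Real.arcsin (ψ e)) = Bᵀ.mulVec θ') →
        Bᵀ.mulVec θ = fun e => Real.arcsin (ψ e)) := by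
  have hγπ : γ ≤ Real.pi / 2 := hγ2.le
  have half_pi_interval {x : ℝ} (hx : |x| ≤ γ) : x ∈ Set.Icc (-(Real.pi / 2)) (Real.pi / 2) :=
    abs_le.1 (hx.trans hγπ)
  have sin_arcsin_of_le {y : ℝ} (hy : |y| ≤ Real.sin γ) : Real.sin (Real.arcsin y) = y :=
    Real.sin_arcsin' (abs_le.1 (hy.trans (Real.sin_le_one γ)))
  refine ⟨⟨?_, ?_⟩, ?_⟩
  · rintro ⟨θ, hω, hθ⟩
    exact ⟨_, hω.symm, fun e => Real.abs_sin_le_sin_of_abs_le hγπ (hθ e), θ,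
      funext fun e => Real.arcsin_sin' (half_pi_interval (hθ e))⟩
  · rintro ⟨ψ, hω, hψ, θ', hθ'⟩
    refine ⟨θ', ?_, fun e => ?_⟩
    · simp only [← hθ', sin_arcsin_of_le (hψ _), hω]
    · simpa only [← hθ'] using Real.abs_arcsin_le_of_abs_le_sin hγ hγπ (hψ e)
  · rintro θ ψ hθω hθ hψω hψ ⟨θ', hθ'⟩
    have hsin : (fun e => Real.sin (Bᵀ.mulVec θ' e)) = ψ := by
      simp only [← hθ', sin_arcsin_of_le (hψ _)]
    rw [hθ']
    refine transpose_mulVec_eq_of_mulVec_comp_eq Real.strictMonoOn_sin B ha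
      (fun e => half_pi_interval (hθ e)) (fun e => ?_) (by rw [← hθω, hsin, hψω])
    rw [← congrFun hθ' e]
    exact ⟨Real.neg_pi_div_two_le_arcsin _, Real.arcsin_le_pi_div_two _⟩

/-- Equivalence of Kuramoto fixed points and auxiliary edge variables: there
exists a phase-cohesive solution `θ` of `ω = B W sin(Bᵀθ)` iff there exists
`ψ` with `B W ψ = ω`, `‖ψ‖_∞ ≤ sin γ`, and `arcsin ψ ∈ Im Bᵀ`; moreover then
`Bᵀθ = arcsin ψ`. -/
theorem fixed_point_aux_equivalence
    (n m : ℕ) (s t : Fin m → Fin n) (a : Fin m → ℝ)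
    (B : Matrix (Fin n) (Fin m) ℝ) (ω : Fin n → ℝ) (γ : ℝ)
    (hB : ∀ i e, B i e = if i = s e then 1 else if i = t e then -1 else 0)
    (hst : ∀ e, s e ≠ t e)
    (ha : ∀ e, 0 < a e)
    (hconn : (SimpleGraph.fromRel (fun i j => ∃ e, s e = i ∧ t e = j)).Connected)
    (hω : ∑ i, ω i = 0)
    (hγ : 0 ≤ γ) (hγ2 : γ < Real.pi / 2) :
    ((∃ θ : Fin n → ℝ,
        ω = (B * Matrix.diagonal a).mulVec (fun e => Real.sin (Bᵀ.mulVec θ e)) ∧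
        ∀ e, |Bᵀ.mulVec θ e| ≤ γ) ↔
      (∃ ψ : Fin m → ℝ,
        (B * Matrix.diagonal a).mulVec ψ = ω ∧
        (∀ e, |ψ e| ≤ Real.sin γ) ∧
        ∃ θ' : Fin n → ℝ, (fun e => Real.arcsin (ψ e)) = Bᵀ.mulVec θ')) ∧
    (∀ (θ : Fin n → ℝ) (ψ : Fin m → ℝ),
        ω = (B * Matrix.diagonal a).mulVec (fun e => Real.sin (Bᵀ.mulVec θ e)) →
        (∀ e, |Bᵀ.mulVec θ e| ≤ γ) →
        (B * Matrix.diagonal a).mulVec ψ = ω →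
        (∀ e, |ψ e| ≤ Real.sin γ) →
        (∃ θ' : Fin n → ℝ, (fun e => Real.arcsin (ψ e)) = Bᵀ.mulVec θ') →
        Bᵀ.mulVec θ = fun e => Real.arcsin (ψ e)) :=
  fixed_point_aux_equivalence_general n m a B ω γ ha hγ hγ2
end

section
/- Uniqueness of cohesive equilibria: on a connected graph, the map θ ↦ B W sin(Bᵀθ) restricted to {θ : ‖Bᵀθ‖_∞ ≤ γ}, with γ < π/2, is injective modulo translation by multiples of 1_n; i.e., if θ and θ' both satisfy the Kuramoto fixed-point equations ω = B W sin(Bᵀθ) and both have all edge differences in [−γ, γ] with γ < π/2, then Bᵀθ = Bᵀθ'. -/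
open Matrix

lemma sin_mono_aux {x y : ℝ} (hx : x ∈ Set.Icc (-(Real.pi/2)) (Real.pi/2))
    (hy : y ∈ Set.Icc (-(Real.pi/2)) (Real.pi/2)) :
    0 ≤ (x - y) * (Real.sin x - Real.sin y) := by
  rcases le_total y x with h | h
  · have hs := Real.strictMonoOn_sin.monotoneOn hy hx h
    exact mul_nonneg (by linarith) (by linarith)
  · have hs := Real.strictMonoOn_sin.monotoneOn hx hy h
    have heq : (x - y) * (Real.sin x - Real.sin y)
        = (y - x) * (Real.sin y - Real.sin x) := by ring
    rw [heq]
    exact mul_nonneg (by linarith) (by linarith)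

lemma dot_aux (n m : ℕ) (B : Matrix (Fin n) (Fin m) ℝ) (a : Fin m → ℝ)
    (x : Fin n → ℝ) (w : Fin m → ℝ) :
    x ⬝ᵥ (B * Matrix.diagonal a).mulVec w = ∑ e, a e * ((Bᵀ.mulVec x e) * w e) := by
  rw [Matrix.dotProduct_mulVec, ← Matrix.vecMul_vecMul, ← Matrix.mulVec_transpose]
  simp [dotProduct, Matrix.vecMul_diagonal, Matrix.mulVec_diagonal,
    Matrix.mulVec_transpose]
  congr 1; ext e; ring

/-- Uniqueness of phase-cohesive Kuramoto equilibria: on a connected weighted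
graph, if `θ` and `θ'` both solve `ω = B W sin(Bᵀθ)` with all edge differences
in `[-γ, γ]`, `γ < π/2`, then `Bᵀθ = Bᵀθ'`. -/
theorem cohesive_equilibrium_unique
    (n m : ℕ) (s t : Fin m → Fin n) (a : Fin m → ℝ)
    (B : Matrix (Fin n) (Fin m) ℝ) (ω : Fin n → ℝ) (γ : ℝ)
    (θ θ' : Fin n → ℝ)
    (hB : ∀ i e, B i e = if i = s e then 1 else if i = t e then -1 else 0)
    (hst : ∀ e, s e ≠ t e)
    (ha : ∀ e, 0 < a e)
    (hconn : (SimpleGraph.fromRel (fun i j => ∃ e, s e = i ∧ t e = j)).Connected)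
    (hγ : γ < Real.pi / 2)
    (hθ : ω = (B * Matrix.diagonal a).mulVec (fun e => Real.sin (Bᵀ.mulVec θ e)))
    (hθ' : ω = (B * Matrix.diagonal a).mulVec (fun e => Real.sin (Bᵀ.mulVec θ' e)))
    (hcoh : ∀ e, |Bᵀ.mulVec θ e| ≤ γ)
    (hcoh' : ∀ e, |Bᵀ.mulVec θ' e| ≤ γ) :
    Bᵀ.mulVec θ = Bᵀ.mulVec θ' := by
  classical
  set u : Fin m → ℝ := Bᵀ.mulVec θ with hu
  set v : Fin m → ℝ := Bᵀ.mulVec θ' with hv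
  have hmemu : ∀ e, u e ∈ Set.Icc (-(Real.pi/2)) (Real.pi/2) := by
    intro e
    have h := hcoh e
    rw [abs_le] at h
    exact ⟨by linarith [h.1], by linarith [h.2]⟩
  have hmemv : ∀ e, v e ∈ Set.Icc (-(Real.pi/2)) (Real.pi/2) := by
    intro e
    have h := hcoh' e
    rw [abs_le] at h
    exact ⟨by linarith [h.1], by linarith [h.2]⟩
  have h0 : (B * Matrix.diagonal a).mulVec (fun e => Real.sin (u e))
      = (B * Matrix.diagonal a).mulVec (fun e => Real.sin (v e)) :=
    hθ.symm.trans hθ'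
  have hdiff : Bᵀ.mulVec (θ - θ') = u - v := by
    rw [Matrix.mulVec_sub]
  have hsum : ∑ e, a e * ((u e - v e) * (Real.sin (u e) - Real.sin (v e))) = 0 := by
    have h1 := dot_aux n m B a (θ - θ') (fun e => Real.sin (u e))
    have h2 := dot_aux n m B a (θ - θ') (fun e => Real.sin (v e))
    have h3 : (θ - θ') ⬝ᵥ (B * Matrix.diagonal a).mulVec (fun e => Real.sin (u e))
        = (θ - θ') ⬝ᵥ (B * Matrix.diagonal a).mulVec (fun e => Real.sin (v e)) := by
      rw [h0]
    rw [h1, h2, hdiff] at h3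
    have := sub_eq_zero.mpr h3
    rw [← Finset.sum_sub_distrib] at this
    rw [← this]
    apply Finset.sum_congr rfl
    intro e _
    simp [Pi.sub_apply]
    ring
  have hterm : ∀ e ∈ Finset.univ,
      (0:ℝ) ≤ a e * ((u e - v e) * (Real.sin (u e) - Real.sin (v e))) := by
    intro e _
    exact mul_nonneg (ha e).le (sin_mono_aux (hmemu e) (hmemv e))
  have hzero := (Finset.sum_eq_zero_iff_of_nonneg hterm).mp hsum
  funext e
  have he := hzero e (Finset.mem_univ e)
  have hprod : (u e - v e) * (Real.sin (u e) - Real.sin (v e)) = 0 := by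
    rcases mul_eq_zero.mp he with h | h
    · exact absurd h (ha e).ne'
    · exact h
  by_contra hne
  rcases lt_or_gt_of_ne hne with hlt | hgt
  · have := Real.strictMonoOn_sin (hmemu e) (hmemv e) hlt
    nlinarith
  · have := Real.strictMonoOn_sin (hmemv e) (hmemu e) hgt
    nlinarith
end
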